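/- Let V ⊆ W ⊆ M_n(ℂ) be operator systems with dim(W) ≤ dim(V) + 2. If V is strongly triangle-free, then W is triangle-free. -/

import Mathlib

open Matrix

/-- An orthogonal projection in `M_n(ℂ)`: a Hermitian idempotent matrix. -/
def IsProjection {n : ℕ} (P : Matrix (Fin n) (Fin n) ℂ) : Prop :=
  P.IsHermitian ∧ P * P = P

/-- The compression space `PVP = span {PAP : A ∈ V}`. -/
noncomputable def compressionSpace {n : ℕ} (V : Set (Matrix (Fin n) (Fin n) ℂ))
    (P : Matrix (Fin n) (Fin n) ℂ) : Submodule ℂ (Matrix (Fin n) (Fin n) ℂ) :=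
  Submodule.span ℂ ((fun A => P * A * P) '' V)

/-- A `k`-clique for `V`: a rank-`k` projection `P` with `dim (PVP) = k²`. -/
def IsClique {n : ℕ} (V : Set (Matrix (Fin n) (Fin n) ℂ)) (k : ℕ)
    (P : Matrix (Fin n) (Fin n) ℂ) : Prop :=
  IsProjection P ∧ P.rank = k ∧ Module.finrank ℂ (compressionSpace V P) = k ^ 2

/-- A `k`-anticlique for `V`: a rank-`k` projection `P` such that `PAP` is a scalar
multiple of `P` for every `A ∈ V`. -/
def IsAnticlique {n : ℕ} (V : Set (Matrix (Fin n) (Fin n) ℂ)) (k : ℕ)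
    (P : Matrix (Fin n) (Fin n) ℂ) : Prop :=
  IsProjection P ∧ P.rank = k ∧ ∀ A ∈ V, ∃ c : ℂ, P * A * P = c • P

/-- `V` is triangle-free if it has no 3-clique. -/
def TriangleFree {n : ℕ} (V : Set (Matrix (Fin n) (Fin n) ℂ)) : Prop :=
  ∀ P : Matrix (Fin n) (Fin n) ℂ, ¬ IsClique V 3 P

/-- `V` is strongly triangle-free if every rank-3 projection dominates a 2-anticlique. -/
def StronglyTriangleFree {n : ℕ} (V : Set (Matrix (Fin n) (Fin n) ℂ)) : Prop :=
  ∀ Q : Matrix (Fin n) (Fin n) ℂ, IsProjection Q → Q.rank = 3 →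
    ∃ P : Matrix (Fin n) (Fin n) ℂ, IsAnticlique V 2 P ∧ P * Q = P ∧ Q * P = P

lemma exists_isometry {n k : ℕ} (P : Matrix (Fin n) (Fin n) ℂ)
    (hP : P.IsHermitian) (hP2 : P * P = P) (hrk : P.rank = k) :
    ∃ B : Matrix (Fin n) (Fin k) ℂ, Bᴴ * B = 1 ∧ B * Bᴴ = P := by
  classical
  set U : Matrix (Fin n) (Fin n) ℂ := (hP.eigenvectorUnitary : Matrix (Fin n) (Fin n) ℂ) with hU
  have hUU : Uᴴ * U = 1 := by
    have := hP.eigenvectorUnitary.2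
    rw [Matrix.mem_unitaryGroup_iff'] at this
    simpa [star_eq_conjTranspose] using this
  have hUU' : U * Uᴴ = 1 := by
    have := hP.eigenvectorUnitary.2
    rw [Matrix.mem_unitaryGroup_iff] at this
    simpa [star_eq_conjTranspose] using this
  set e : Fin n → ℂ := fun i => ((hP.eigenvalues i : ℝ) : ℂ) with he
  have hspec : P = U * diagonal e * Uᴴ := by
    have := hP.spectral_theorem
    exact this
  have hidem : ∀ i, e i * e i = e i := by
    intro i
    have h1 : diagonal e = Uᴴ * P * U := by
      rw [hspec]
      simp only [Matrix.mul_assoc]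
      rw [show Uᴴ * (U * (diagonal e * (Uᴴ * U))) = Uᴴ * U * (diagonal e * (Uᴴ * U)) by
        rw [Matrix.mul_assoc]]
      rw [hUU, Matrix.one_mul, Matrix.mul_one]
    have hDD : (diagonal e) * (diagonal e) = diagonal e := by
      rw [h1]
      calc Uᴴ * P * U * (Uᴴ * P * U) = Uᴴ * (P * (U * Uᴴ) * P) * U := by
            simp only [Matrix.mul_assoc]
        _ = Uᴴ * P * U := by rw [hUU', Matrix.mul_one, hP2, Matrix.mul_assoc]
    rw [diagonal_mul_diagonal] at hDD
    have := congrFun (congrFun (congrArg (fun M => M) hDD) i) i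
    simpa [diagonal_apply_eq] using congrFun (congrFun hDD i) i
  have hone : ∀ i, hP.eigenvalues i ≠ 0 → e i = 1 := by
    intro i hi
    have h0 : e i * (e i - 1) = 0 := by
      have := hidem i; ring_nf; linear_combination this
    have hei : e i ≠ 0 := by simp [he, hi]
    rcases mul_eq_zero.mp h0 with h | h
    · exact absurd h hei
    · exact sub_eq_zero.mp h
  have hcard : Fintype.card {i // hP.eigenvalues i ≠ 0} = k := by
    rw [← hP.rank_eq_card_non_zero_eigs]; exact hrk
  let eqv : Fin k ≃ {i // hP.eigenvalues i ≠ 0} := (Fintype.equivFinOfCardEq hcard).symm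
  let c : Fin k → Fin n := fun j => (eqv j : Fin n)
  have hcinj : Function.Injective c := fun a b hab => eqv.injective (Subtype.ext hab)
  refine ⟨U.submatrix id c, ?_, ?_⟩
  · have h1 : (U.submatrix id c)ᴴ = Uᴴ.submatrix c id := by
      simp [conjTranspose_submatrix]
    rw [h1]
    have h2 := Matrix.submatrix_mul Uᴴ U c (Equiv.refl (Fin n)) c (Equiv.refl (Fin n)).bijective
    simp only [Equiv.coe_refl] at h2
    rw [← h2, hUU, Matrix.submatrix_one c hcinj]
  · ext a b
    rw [hspec]
    have hBB : (U.submatrix id c * (U.submatrix id c)ᴴ) a b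
        = ∑ j : Fin k, U a (c j) * star (U b (c j)) := by
      simp [Matrix.mul_apply, conjTranspose_apply]
    have hR : (U * diagonal e * Uᴴ) a b = ∑ i : Fin n, U a i * e i * star (U b i) := by
      simp [Matrix.mul_apply, Matrix.diagonal, Finset.mul_sum, conjTranspose_apply,
        Finset.sum_ite_eq, mul_comm, mul_assoc, mul_left_comm]
    rw [hBB, hR]
    calc ∑ j : Fin k, U a (c j) * star (U b (c j))
        = ∑ i : {i // hP.eigenvalues i ≠ 0}, U a (i : Fin n) * star (U b (i : Fin n)) :=
          Equiv.sum_comp eqv (fun i => U a (i : Fin n) * star (U b (i : Fin n)))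
      _ = ∑ i ∈ Finset.univ.filter (fun i => hP.eigenvalues i ≠ 0),
            U a i * star (U b i) :=
          (Finset.sum_subtype (Finset.univ.filter (fun i => hP.eigenvalues i ≠ 0))
            (fun x => by simp) (fun i => U a i * star (U b i))).symm
      _ = ∑ i : Fin n, U a i * e i * star (U b i) := by
          rw [Finset.sum_filter]
          apply Finset.sum_congr rfl
          intro i _
          by_cases hi : hP.eigenvalues i ≠ 0
          · rw [if_pos hi, hone i hi, mul_one]
          · rw [if_neg hi]
            push_neg at hi
            have hz : e i = 0 := by simp [he, hi]
            rw [hz, mul_zero, zero_mul]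


/-- The linear map `Y ↦ B * Y * Bᴴ`. -/
noncomputable def sandwich {m k : ℕ} (B : Matrix (Fin m) (Fin k) ℂ) :
    Matrix (Fin k) (Fin k) ℂ →ₗ[ℂ] Matrix (Fin m) (Fin m) ℂ where
  toFun Y := B * Y * Bᴴ
  map_add' X Y := by show B * (X + Y) * Bᴴ = B * X * Bᴴ + B * Y * Bᴴ; rw [Matrix.mul_add, Matrix.add_mul]
  map_smul' c Y := by simp [Matrix.mul_smul, Matrix.smul_mul]

/-- The compression linear map `X ↦ P * X * P`. -/
noncomputable def compr {n : ℕ} (P : Matrix (Fin n) (Fin n) ℂ) :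
    Matrix (Fin n) (Fin n) ℂ →ₗ[ℂ] Matrix (Fin n) (Fin n) ℂ where
  toFun X := P * X * P
  map_add' X Y := by show P * (X + Y) * P = P * X * P + P * Y * P; rw [Matrix.mul_add, Matrix.add_mul]
  map_smul' c Y := by simp [Matrix.mul_smul, Matrix.smul_mul]

lemma finrank_range_compr {n k : ℕ} (P : Matrix (Fin n) (Fin n) ℂ)
    (B : Matrix (Fin n) (Fin k) ℂ) (h1 : Bᴴ * B = 1) (h2 : B * Bᴴ = P) :
    Module.finrank ℂ (LinearMap.range (compr P)) = k ^ 2 := by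
  have hcomp : compr P = (sandwich B).comp (sandwich Bᴴ) := by
    ext X : 1
    simp only [compr, sandwich, LinearMap.coe_mk, AddHom.coe_mk, LinearMap.comp_apply,
      conjTranspose_conjTranspose]
    rw [← h2]
    simp only [Matrix.mul_assoc]
  have hsurj : Function.Surjective (sandwich Bᴴ) := by
    intro Y
    refine ⟨B * Y * Bᴴ, ?_⟩
    simp only [sandwich, LinearMap.coe_mk, AddHom.coe_mk, conjTranspose_conjTranspose]
    calc Bᴴ * (B * Y * Bᴴ) * B = (Bᴴ * B) * Y * (Bᴴ * B) := by simp only [Matrix.mul_assoc]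
      _ = Y := by rw [h1, Matrix.one_mul, Matrix.mul_one]
  have hinj : Function.Injective (sandwich B) := by
    intro X Y hXY
    simp only [sandwich, LinearMap.coe_mk, AddHom.coe_mk] at hXY
    have key : ∀ Z : Matrix (Fin k) (Fin k) ℂ, Bᴴ * (B * Z * Bᴴ) * B = Z := by
      intro Z
      calc Bᴴ * (B * Z * Bᴴ) * B = (Bᴴ * B) * Z * (Bᴴ * B) := by simp only [Matrix.mul_assoc]
        _ = Z := by rw [h1, Matrix.one_mul, Matrix.mul_one]
    have h3 := congrArg (fun M => Bᴴ * M * B) hXY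
    simp only [key] at h3
    exact h3
  rw [hcomp, LinearMap.range_comp, LinearMap.range_eq_top.mpr hsurj, Submodule.map_top]
  rw [LinearMap.finrank_range_of_inj hinj]
  rw [Module.finrank_matrix, Fintype.card_fin, Module.finrank_self, mul_one, sq]

section helpers
variable {K : Type*} {M : Type*} [Field K] [AddCommGroup M] [Module K M]
  [FiniteDimensional K M]

lemma finrank_submodule_eq_inf_ker_add_map (S : Submodule K M) (f : M →ₗ[K] M) :
    Module.finrank K S =
      Module.finrank K ↥(S ⊓ LinearMap.ker f) + Module.finrank K ↥(S.map f) := by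
  have h := LinearMap.finrank_range_add_finrank_ker (f.comp S.subtype)
  have hr : LinearMap.range (f.comp S.subtype) = S.map f := by
    rw [LinearMap.range_comp, Submodule.range_subtype]
  have hk : Module.finrank K ↥(LinearMap.ker (f.comp S.subtype))
      = Module.finrank K ↥(S ⊓ LinearMap.ker f) := by
    rw [LinearMap.ker_comp, ← Submodule.map_comap_subtype,
      Submodule.finrank_map_subtype_eq]
  rw [hr, hk] at h
  omega

lemma exists_finset_card_le_sup_span (m : ℕ) :
    ∀ V W : Submodule K M, V ≤ W →
      Module.finrank K W ≤ Module.finrank K V + m →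
      ∃ s : Finset M, s.card ≤ m ∧ W ≤ V ⊔ Submodule.span K (s : Set M) := by
  classical
  induction m with
  | zero =>
    intro V W hVW h
    refine ⟨∅, le_refl 0, ?_⟩
    have : V = W := Submodule.eq_of_le_of_finrank_le hVW (by simpa using h)
    simp [← this]
  | succ m ih =>
    intro V W hVW h
    by_cases hWV : W ≤ V
    · exact ⟨∅, by simp, by simpa using hWV⟩
    · obtain ⟨x, hxW, hxV⟩ := SetLike.exists_of_lt (lt_of_le_of_ne hVW (fun hh => hWV hh.ge))
      set V' := V ⊔ Submodule.span K {x} with hV'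
      have hV'W : V' ≤ W := sup_le hVW (by
        rw [Submodule.span_le, Set.singleton_subset_iff]; exact hxW)
      have hlt : V < V' := by
        refine lt_of_le_of_ne le_sup_left (fun hh => hxV ?_)
        rw [hh]
        exact Submodule.mem_sup_right (Submodule.subset_span (Set.mem_singleton x))
      have hfr : Module.finrank K V < Module.finrank K V' :=
        Submodule.finrank_lt_finrank_of_lt hlt
      have h' : Module.finrank K W ≤ Module.finrank K V' + m := by omega
      obtain ⟨s, hs, hle⟩ := ih V' W hV'W h'
      refine ⟨insert x s, ?_, ?_⟩
      · calc (insert x s).card ≤ s.card + 1 := Finset.card_insert_le x s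
          _ ≤ m + 1 := by omega
      · refine hle.trans ?_
        rw [hV', sup_assoc]
        refine sup_le le_sup_left (le_trans ?_ le_sup_right)
        refine sup_le ?_ ?_ <;> apply Submodule.span_mono <;> simp
end helpers



lemma compressionSpace_eq_map {n : ℕ} (V : Submodule ℂ (Matrix (Fin n) (Fin n) ℂ))
    (P : Matrix (Fin n) (Fin n) ℂ) :
    compressionSpace (V : Set (Matrix (Fin n) (Fin n) ℂ)) P = V.map (compr P) := by
  unfold compressionSpace
  rw [show ((fun A => P * A * P) '' (V : Set (Matrix (Fin n) (Fin n) ℂ)))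
      = ⇑(compr P) '' (V : Set (Matrix (Fin n) (Fin n) ℂ)) from rfl,
    ← Submodule.map_coe, Submodule.span_eq]

lemma collapse {n : ℕ} {P Q : Matrix (Fin n) (Fin n) ℂ}
    (hPQ : P * Q = P) (hQP : Q * P = P) (A : Matrix (Fin n) (Fin n) ℂ) :
    P * (Q * A * Q) * P = P * A * P := by
  rw [show P * (Q * A * Q) * P = P * Q * A * (Q * P) by simp only [Matrix.mul_assoc], hQP, hPQ]

/-- If `V ⊆ W` are operator systems with `dim W ≤ dim V + 2` and `V` is strongly
triangle-free, then `W` is triangle-free. -/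
theorem triangleFree_of_small_extension {n : ℕ}
    (V W : Submodule ℂ (Matrix (Fin n) (Fin n) ℂ))
    (hVW : V ≤ W)
    (h1V : (1 : Matrix (Fin n) (Fin n) ℂ) ∈ V) (hstarV : ∀ A ∈ V, Aᴴ ∈ V)
    (h1W : (1 : Matrix (Fin n) (Fin n) ℂ) ∈ W) (hstarW : ∀ A ∈ W, Aᴴ ∈ W)
    (hdim : Module.finrank ℂ W ≤ Module.finrank ℂ V + 2)
    (hV : StronglyTriangleFree (V : Set (Matrix (Fin n) (Fin n) ℂ))) :
    TriangleFree (W : Set (Matrix (Fin n) (Fin n) ℂ)) := by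
  intro Q hQ
  obtain ⟨⟨hQherm, hQidem⟩, hQrank, hQdim⟩ := hQ
  obtain ⟨P, ⟨⟨hPherm, hPidem⟩, hPrank, hPanti⟩, hPQ, hQP⟩ := hV Q ⟨hQherm, hQidem⟩ hQrank
  obtain ⟨C, hC1, hC2⟩ := exists_isometry Q hQherm hQidem hQrank
  obtain ⟨B, hB1, hB2⟩ := exists_isometry P hPherm hPidem hPrank
  have hQ9 : Module.finrank ℂ ↥(LinearMap.range (compr Q)) = 9 := by
    rw [finrank_range_compr Q C hC1 hC2]; norm_num
  have hP4 : Module.finrank ℂ ↥(LinearMap.range (compr P)) = 4 := by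
    rw [finrank_range_compr P B hB1 hB2]; norm_num
  rw [compressionSpace_eq_map] at hQdim
  -- step: finrank (V.map (compr Q)) ≥ 7
  obtain ⟨s, hs, hle⟩ := exists_finset_card_le_sup_span 2 V W hVW hdim
  classical
  have hspan2 : Module.finrank ℂ ↥((Submodule.span ℂ (s : Set _)).map (compr Q)) ≤ 2 := by
    rw [Submodule.map_span, ← Finset.coe_image]
    exact le_trans (finrank_span_finset_le_card _) (le_trans Finset.card_image_le hs)
  have hmaple : W.map (compr Q) ≤
      V.map (compr Q) ⊔ (Submodule.span ℂ (s : Set _)).map (compr Q) := by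
    rw [← Submodule.map_sup]; exact Submodule.map_mono hle
  have hsup := Submodule.finrank_sup_add_finrank_inf_eq
    (V.map (compr Q)) ((Submodule.span ℂ (s : Set _)).map (compr Q))
  have h9 : Module.finrank ℂ ↥(W.map (compr Q)) = 9 := by rw [hQdim]; norm_num
  have hmono1 := Submodule.finrank_mono hmaple
  have h7 : 7 ≤ Module.finrank ℂ ↥(V.map (compr Q)) := by omega
  -- anticlique bound
  have hanti : (V.map (compr Q)).map (compr P) ≤ Submodule.span ℂ {P} := by
    rintro y hy
    simp only [Submodule.mem_map] at hy
    obtain ⟨x, ⟨A, hA, rfl⟩, rfl⟩ := hy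
    obtain ⟨c, hc⟩ := hPanti A hA
    show P * (Q * A * Q) * P ∈ _
    rw [collapse hPQ hQP, hc]
    exact Submodule.smul_mem _ c (Submodule.mem_span_singleton_self P)
  have hone : Module.finrank ℂ ↥((V.map (compr Q)).map (compr P)) ≤ 1 := by
    refine le_trans (Submodule.finrank_mono hanti) ?_
    by_cases hP0 : P = (0 : Matrix (Fin n) (Fin n) ℂ)
    · rw [hP0, Submodule.span_zero_singleton]
      simp
    · rw [finrank_span_singleton hP0]
  have hsplit1 := finrank_submodule_eq_inf_ker_add_map (V.map (compr Q)) (compr P)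
  have h6 : 6 ≤ Module.finrank ℂ ↥(V.map (compr Q) ⊓ LinearMap.ker (compr P)) := by omega
  -- the big kernel has dimension 5
  have hcompr_comp : (compr P).comp (compr Q) = compr P := by
    ext X : 1
    exact collapse hPQ hQP X
  have hrangemap : (LinearMap.range (compr Q)).map (compr P) = LinearMap.range (compr P) := by
    rw [← LinearMap.range_comp, hcompr_comp]
  have hsplit2 := finrank_submodule_eq_inf_ker_add_map (LinearMap.range (compr Q)) (compr P)
  rw [hrangemap, hP4, hQ9] at hsplit2
  have hmono2 : V.map (compr Q) ⊓ LinearMap.ker (compr P) ≤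
      LinearMap.range (compr Q) ⊓ LinearMap.ker (compr P) :=
    inf_le_inf_right _ (LinearMap.map_le_range)
  have := Submodule.finrank_mono hmono2
  omega
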